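/- In a finite binary-action supermodular game, if y is reachable from x by a monotone improvement path and x' ≥ x, then the supremum y ∨ x' is reachable from x' by a monotone improvement path. -/

import Mathlib

variable {V : Type*} [Fintype V] [DecidableEq V]

/-- A configuration assigns each player an action in `{-1, +1}` (as integers). -/
def Conf (x : V → ℤ) : Prop := ∀ i, x i = 1 ∨ x i = -1

/-- Supermodularity (increasing differences) for a binary-action game with
utilities `u`. -/
def Supermodular (u : V → (V → ℤ) → ℝ) : Prop :=
  ∀ (i : V) (x y : V → ℤ), Conf x → Conf y → (∀ j, j ≠ i → y j ≤ x j) →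
    u i (Function.update y i 1) - u i (Function.update y i (-1)) ≤
      u i (Function.update x i 1) - u i (Function.update x i (-1))

/-- One step of an improvement path: a single player flips her action and
strictly increases her utility. -/
def ImpStep (u : V → (V → ℤ) → ℝ) (x y : V → ℤ) : Prop :=
  ∃ i : V, y = Function.update x i (-(x i)) ∧ u i x < u i y

/-- A monotone improvement step (the active player switches from -1 to +1). -/
def MonStep (u : V → (V → ℤ) → ℝ) (x y : V → ℤ) : Prop :=
  ImpStep u x y ∧ x ≤ y

/-- An anti-monotone improvement step (the active player switches from +1 to -1). -/
def AntiStep (u : V → (V → ℤ) → ℝ) (x y : V → ℤ) : Prop :=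
  ImpStep u x y ∧ y ≤ x

/-- `y` is reachable from `x` by an improvement path. -/
def ImpReach (u : V → (V → ℤ) → ℝ) : (V → ℤ) → (V → ℤ) → Prop :=
  Relation.ReflTransGen (ImpStep u)

/-- `y` is reachable from `x` by a monotone improvement path. -/
def MonReach (u : V → (V → ℤ) → ℝ) : (V → ℤ) → (V → ℤ) → Prop :=
  Relation.ReflTransGen (MonStep u)

/-- `y` is reachable from `x` by an anti-monotone improvement path. -/
def AntiReach (u : V → (V → ℤ) → ℝ) : (V → ℤ) → (V → ℤ) → Prop :=
  Relation.ReflTransGen (AntiStep u)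

/-- `x` is a (pure strategy Nash) equilibrium: no unilateral flip strictly
improves the deviator's utility. -/
def IsNash (u : V → (V → ℤ) → ℝ) (x : V → ℤ) : Prop :=
  ∀ i : V, u i (Function.update x i (-(x i))) ≤ u i x

open Classical in
/-- `fplus u x` is the componentwise supremum of the set of configurations
reachable from `x` by monotone improvement paths. -/
noncomputable def fplus (u : V → (V → ℤ) → ℝ) (x : V → ℤ) : V → ℤ :=
  fun i => if ∃ y, MonReach u x y ∧ y i = 1 then 1 else -1

open Classical in
/-- `fminus u x` is the componentwise infimum of the set of configurations
reachable from `x` by anti-monotone improvement paths. -/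
noncomputable def fminus (u : V → (V → ℤ) → ℝ) (x : V → ℤ) : V → ℤ :=
  fun i => if ∃ y, AntiReach u x y ∧ y i = -1 then -1 else 1

/-! Each step of a monotone improvement path lifts to its join with `x'`: the switching player
either already plays `+1` there, or, by increasing differences, gains at least as much from
switching in the larger configuration. -/

section

omit [Fintype V]

variable {u : V → (V → ℤ) → ℝ}

lemma Conf.update_neg {x : V → ℤ} (hx : Conf x) (i : V) :
    Conf (Function.update x i (-(x i))) := by
  intro j
  rcases eq_or_ne j i with rfl | hj
  · rcases hx j with h | h <;> simp [h]
  · simpa [Function.update_of_ne hj] using hx j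

omit [DecidableEq V] in
lemma Conf.sup {x y : V → ℤ} (hx : Conf x) (hy : Conf y) : Conf (x ⊔ y) := fun i => by
  rcases hx i with h | h <;> rcases hy i with h' | h' <;> simp [h, h']

lemma MonReach.conf {x y : V → ℤ} (hx : Conf x) (h : MonReach u x y) : Conf y := by
  induction h with
  | refl => exact hx
  | tail _ hstep ih =>
    obtain ⟨⟨i, rfl, -⟩, -⟩ := hstep
    exact ih.update_neg i

lemma MonStep.exists_eq_update {x y : V → ℤ} (hx : Conf x) (h : MonStep u x y) :
    ∃ i, x i = -1 ∧ y = Function.update x i 1 ∧ u i x < u i y := by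
  obtain ⟨⟨i, rfl, hu⟩, hle⟩ := h
  have hi : x i = -1 := (hx i).resolve_left fun h1 => by simpa [h1] using hle i
  exact ⟨i, hi, by rw [hi, neg_neg], hu⟩

lemma monStep_update_one {x : V → ℤ} {i : V} (hi : x i = -1)
    (hu : u i x < u i (Function.update x i 1)) : MonStep u x (Function.update x i 1) :=
  ⟨⟨i, by rw [hi, neg_neg], hu⟩, le_update_self_iff.2 (by rw [hi]; norm_num)⟩

lemma Supermodular.lt_update_one_of_le (hsm : Supermodular u) {x w : V → ℤ} {i : V}
    (hx : Conf x) (hw : Conf w) (hxw : x ≤ w) (hxi : x i = -1) (hwi : w i = -1)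
    (hu : u i x < u i (Function.update x i 1)) : u i w < u i (Function.update w i 1) := by
  have hdiff := hsm i w x hw hx fun j _ => hxw j
  have hx_fix : Function.update x i (-1) = x := Function.update_eq_self_iff.2 hxi.symm
  have hw_fix : Function.update w i (-1) = w := Function.update_eq_self_iff.2 hwi.symm
  rw [hx_fix, hw_fix] at hdiff
  linarith

lemma MonStep.monReach_sup (hsm : Supermodular u) {x y z : V → ℤ} (hx : Conf x) (hz : Conf z)
    (h : MonStep u x y) : MonReach u (x ⊔ z) (y ⊔ z) := by
  obtain ⟨i, hxi, rfl, hu⟩ := h.exists_eq_update hx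
  have hzi : z i ≤ 1 := by rcases hz i with h | h <;> simp [h]
  have hjoin : Function.update x i 1 ⊔ z = Function.update (x ⊔ z) i 1 := by
    funext j
    rcases eq_or_ne j i with rfl | hj
    · simpa using hzi
    · simp [Function.update_of_ne hj]
  rw [hjoin]
  rcases hz i with hzi | hzi
  · rw [Function.update_eq_self_iff.2 (by simp [hxi, hzi])]
    exact .refl
  · have hjoin_i : (x ⊔ z) i = -1 := by simp [hxi, hzi]
    exact .single <| monStep_update_one hjoin_i <|
      hsm.lt_update_one_of_le hx (hx.sup hz) le_sup_left hxi hjoin_i hu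

lemma MonReach.sup_right (hsm : Supermodular u) {x y z : V → ℤ} (hx : Conf x) (hz : Conf z)
    (h : MonReach u x y) : MonReach u (x ⊔ z) (y ⊔ z) := by
  induction h with
  | refl => exact .refl
  | tail hxb hstep ih => exact ih.trans (hstep.monReach_sup hsm (MonReach.conf hx hxb) hz)

end

/-- if `y` is reachable from `x` by a monotone improvement path
and `x' ≥ x`, then `y ⊔ x'` is reachable from `x'` by a monotone improvement
path. -/
theorem monReach_of_ge (u : V → (V → ℤ) → ℝ) (hsm : Supermodular u)
    (x y x' : V → ℤ) (hx : Conf x) (hx' : Conf x')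
    (hxy : MonReach u x y) (hle : x ≤ x') :
    MonReach u x' (y ⊔ x') := by
  simpa only [sup_eq_right.2 hle] using hxy.sup_right hsm hx hx'
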